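/- arXiv:1007.2482 — 2 statements merged into one kernel-verified Lean document; each statement's English description precedes it below -/
import Mathlib

section
/- Let Ω ⊂ ℝ^N be bounded and W : Ω → [0,∞) integrable. Suppose for every η > 0 there exists s₀ > 0 such that for all y ∈ ∂Ω, N ∫₀^{s₀} (∫_{Ω ∩ B_r(y)} W dx) dr/r^{N+1} ≤ η. Then for every ε > 0 there exists δ > 0 such that for every Borel set E ⊂ Ω with |E| ≤ δ and every y ∈ ∂Ω, ∫_E W(x)/|x−y|^N dx ≤ ε. -/
open MeasureTheory Filter Set
open scoped ENNReal NNReal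

/-!
The kernel is a layer-cake integral: for `0 < d = dist x y ≤ s`,
`d⁻ᴺ = N ∫_{(d,s)} r⁻ᴺ⁻¹ dr + s⁻ᴺ`. Multiplying by `W x`, integrating over `E` and exchanging
the integrals bounds `∫_E W(x) |x - y|⁻ᴺ dx` by
`N ∫₀ˢ (∫_{E ∩ B_r(y)} W) r⁻ᴺ⁻¹ dr + s⁻ᴺ ∫_E W`. The hypothesis chooses `s` making the first term
small uniformly in `y ∈ ∂Ω`; for that `s`, absolute continuity of `E ↦ ∫_E W` makes the second
term small once `|E|` is.
-/

theorem mul_integral_inv_pow_succ (N : ℕ) {a b : ℝ} (ha : 0 < a) (hab : a ≤ b) :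
    N * ∫ r in a..b, (r ^ (N + 1))⁻¹ = (a ^ N)⁻¹ - (b ^ N)⁻¹ := by
  have hpos : ∀ r ∈ uIcc a b, 0 < r := fun r hr => ha.trans_le (uIcc_of_le hab ▸ hr).1
  have hderiv : ∀ r ∈ uIcc a b, HasDerivAt (fun r : ℝ => -(r ^ N)⁻¹) (N * (r ^ (N + 1))⁻¹) r := by
    intro r hr
    have hr0 := (hpos r hr).ne'
    refine ((hasDerivAt_pow N r).fun_inv (pow_ne_zero N hr0)).neg.congr_deriv ?_
    rcases N with _ | N
    · simp
    · rw [Nat.add_sub_cancel]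
      field_simp
      ring
  rw [← intervalIntegral.integral_const_mul,
    intervalIntegral.integral_eq_sub_of_hasDerivAt hderiv]
  · ring
  · refine (ContinuousOn.mul continuousOn_const ?_).intervalIntegrable
    exact ContinuousOn.inv₀ (by fun_prop) fun r hr => (pow_pos (hpos r hr) _).ne'

theorem inv_ofReal_pow_eq_mul_lintegral_add (N : ℕ) {a b : ℝ} (ha : 0 < a) (hab : a ≤ b) :
    (ENNReal.ofReal (a ^ N))⁻¹ =
      N * (∫⁻ r in Ioo a b, (ENNReal.ofReal (r ^ (N + 1)))⁻¹) + (ENNReal.ofReal (b ^ N))⁻¹ := by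
  have hpos : ∀ r ∈ Icc a b, 0 < r := fun r hr => ha.trans_le hr.1
  have hlintegral : ∫⁻ r in Ioo a b, (ENNReal.ofReal (r ^ (N + 1)))⁻¹ =
      ENNReal.ofReal (∫ r in a..b, (r ^ (N + 1))⁻¹) := by
    have hcont : ContinuousOn (fun r : ℝ => (r ^ (N + 1))⁻¹) (Icc a b) :=
      ContinuousOn.inv₀ (by fun_prop) fun r hr => (pow_pos (hpos r hr) _).ne'
    rw [intervalIntegral.integral_of_le hab, integral_Ioc_eq_integral_Ioo,
      ofReal_integral_eq_lintegral_ofReal (hcont.integrableOn_Icc.mono_set Ioo_subset_Icc_self)]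
    · refine setLIntegral_congr_fun measurableSet_Ioo fun r hr => ?_
      exact (ENNReal.ofReal_inv_of_pos (pow_pos (hpos r (Ioo_subset_Icc_self hr)) _)).symm
    · exact (ae_restrict_iff' measurableSet_Ioo).mpr <| ae_of_all _ fun r hr =>
        (inv_pos.mpr (pow_pos (hpos r (Ioo_subset_Icc_self hr)) _)).le
  rw [hlintegral, ← ENNReal.ofReal_inv_of_pos (pow_pos ha N),
    ← ENNReal.ofReal_inv_of_pos (pow_pos (ha.trans_le hab) N), ← ENNReal.ofReal_natCast,
    ← ENNReal.ofReal_mul (Nat.cast_nonneg N), ← ENNReal.ofReal_add,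
    mul_integral_inv_pow_succ N ha hab, sub_add_cancel]
  · rw [mul_integral_inv_pow_succ N ha hab, sub_nonneg]
    gcongr
  · exact (inv_pos.mpr (pow_pos (ha.trans_le hab) N)).le

theorem div_ofReal_pow_le_mul_lintegral_add (c : ℝ≥0∞) (N : ℕ) {d s : ℝ} (hd : 0 < d)
    (hs : 0 ≤ s) :
    c / ENNReal.ofReal (d ^ N) ≤
      N * (∫⁻ r in Ioo d s, c / ENNReal.ofReal (r ^ (N + 1))) + c / ENNReal.ofReal (s ^ N) := by
  rcases le_or_gt d s with hds | hsd
  · simp only [div_eq_mul_inv]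
    rw [lintegral_const_mul c (by fun_prop), inv_ofReal_pow_eq_mul_lintegral_add N hd hds]
    exact le_of_eq (by ring)
  · calc c / ENNReal.ofReal (d ^ N) ≤ c / ENNReal.ofReal (s ^ N) := by gcongr
      _ ≤ _ := le_add_self

section MetricMeasure

variable {X : Type*} [MetricSpace X] [MeasurableSpace X] [OpensMeasurableSpace X]
  {μ : Measure X} [SFinite μ]

theorem measurable_uncurry_indicator_ball_div {f : X → ℝ≥0∞} (hf : Measurable f) (y : X)
    (g : ℝ → ℝ≥0∞) (hg : Measurable g) :
    Measurable (Function.uncurry fun x r => (Metric.ball y r).indicator f x / g r) := by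
  have hball : MeasurableSet {p : X × ℝ | dist p.1 y < p.2} :=
    measurableSet_lt ((continuous_id.dist continuous_const).measurable.comp measurable_fst)
      measurable_snd
  exact ((hf.comp measurable_fst).indicator hball).div (hg.comp measurable_snd)

theorem lintegral_div_dist_pow_le [NullSingletonClass μ] {f : X → ℝ≥0∞} (hf : Measurable f)
    (N : ℕ) {s : ℝ} (hs : 0 ≤ s) (E : Set X) (y : X) :
    ∫⁻ x in E, f x / ENNReal.ofReal (dist x y ^ N) ∂μ ≤
      N * (∫⁻ r in Ioo 0 s, (∫⁻ x in E ∩ Metric.ball y r, f x ∂μ) / ENNReal.ofReal (r ^ (N + 1)))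
        + (∫⁻ x in E, f x ∂μ) / ENNReal.ofReal (s ^ N) := by
  set g : X → ℝ → ℝ≥0∞ := fun x r =>
    (Metric.ball y r).indicator f x / ENNReal.ofReal (r ^ (N + 1))
  have hg : Measurable (Function.uncurry g) :=
    measurable_uncurry_indicator_ball_div hf y _ (by fun_prop)
  have hpointwise : ∀ x ≠ y, f x / ENNReal.ofReal (dist x y ^ N) ≤
      N * (∫⁻ r in Ioo 0 s, g x r) + f x / ENNReal.ofReal (s ^ N) := by
    intro x hxy
    have hd : 0 < dist x y := dist_pos.mpr hxy
    refine (div_ofReal_pow_le_mul_lintegral_add (f x) N hd hs).trans ?_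
    gcongr (N : ℝ≥0∞) * ?_ + _
    calc ∫⁻ r in Ioo (dist x y) s, f x / ENNReal.ofReal (r ^ (N + 1))
        = ∫⁻ r in Ioo (dist x y) s, g x r := by
          refine setLIntegral_congr_fun measurableSet_Ioo fun r hr => ?_
          simp only [g, indicator_of_mem (Metric.mem_ball.mpr hr.1)]
      _ ≤ ∫⁻ r in Ioo 0 s, g x r := lintegral_mono_set (Ioo_subset_Ioo_left hd.le)
  have hswap : ∫⁻ x in E, (∫⁻ r in Ioo 0 s, g x r) ∂μ =
      ∫⁻ r in Ioo 0 s, (∫⁻ x in E ∩ Metric.ball y r, f x ∂μ) / ENNReal.ofReal (r ^ (N + 1)) := by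
    rw [lintegral_lintegral_swap hg.aemeasurable]
    refine lintegral_congr fun r => ?_
    simp only [g, div_eq_mul_inv]
    rw [lintegral_mul_const _ (hf.indicator measurableSet_ball),
      lintegral_indicator measurableSet_ball, Measure.restrict_restrict measurableSet_ball,
      inter_comm]
  calc ∫⁻ x in E, f x / ENNReal.ofReal (dist x y ^ N) ∂μ
      ≤ ∫⁻ x in E, N * (∫⁻ r in Ioo 0 s, g x r) + f x / ENNReal.ofReal (s ^ N) ∂μ := by
        refine lintegral_mono_ae ?_
        filter_upwards [ae_restrict_of_ae (μ.ae_ne y)] with x hxy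
        exact hpointwise x hxy
    _ = _ := by
        rw [lintegral_add_left (hg.lintegral_prod_right.const_mul _),
          lintegral_const_mul _ hg.lintegral_prod_right, hswap]
        simp only [div_eq_mul_inv]
        rw [lintegral_mul_const _ hf]

end MetricMeasure

theorem exists_pos_forall_measure_le_setLIntegral_le {α : Type*} [MeasurableSpace α]
    {μ : Measure α} {f : α → ℝ≥0∞} (hf : ∫⁻ x, f x ∂μ ≠ ∞) {ε : ℝ≥0∞} (hε : ε ≠ 0) :
    ∃ δ > (0 : ℝ), ∀ s, μ s ≤ ENNReal.ofReal δ → ∫⁻ x in s, f x ∂μ ≤ ε := by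
  obtain ⟨δ, hδ, hδε⟩ := exists_pos_setLIntegral_lt_of_measure_lt hf hε
  obtain ⟨r, -, hr, hrδ⟩ := ENNReal.lt_iff_exists_real_btwn.mp hδ
  exact ⟨r, ENNReal.ofReal_pos.mp hr, fun s hs => (hδε s (hs.trans_lt hrδ)).le⟩

theorem stmt2_general {N : ℕ} (Ω : Set (EuclideanSpace ℝ (Fin N)))
    (W : EuclideanSpace ℝ (Fin N) → ℝ) (hWm : Measurable W)
    (hWint : IntegrableOn W Ω)
    (hsmall : ∀ η > (0:ℝ), ∃ s₀ > (0:ℝ), ∀ y ∈ frontier Ω,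
      (N : ℝ≥0∞) * ∫⁻ r in Set.Ioo (0:ℝ) s₀,
          (∫⁻ x in Ω ∩ Metric.ball y r, ENNReal.ofReal (W x)) / ENNReal.ofReal (r ^ (N + 1))
        ≤ ENNReal.ofReal η) :
    ∀ ε > (0:ℝ), ∃ δ > (0:ℝ), ∀ E : Set (EuclideanSpace ℝ (Fin N)),
      E ⊆ Ω → MeasurableSet E → volume E ≤ ENNReal.ofReal δ →
      ∀ y ∈ frontier Ω,
        ∫⁻ x in E, ENNReal.ofReal (W x) / ENNReal.ofReal (dist x y ^ N)
          ≤ ENNReal.ofReal ε := by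
  intro ε hε
  rcases Nat.eq_zero_or_pos N with rfl | hN
  · -- `EuclideanSpace ℝ (Fin 0)` is a point, so `frontier Ω = ∅`.
    exact ⟨1, one_pos, fun E _ _ _ y hy => by simp at hy⟩
  have : Nontrivial (EuclideanSpace ℝ (Fin N)) := by
    have : Nonempty (Fin N) := ⟨⟨0, hN⟩⟩
    infer_instance
  obtain ⟨s, hs, hΩsmall⟩ := hsmall (ε / 2) (half_pos hε)
  obtain ⟨δ, hδ, hδabs⟩ := exists_pos_forall_measure_le_setLIntegral_le (μ := volume.restrict Ω)
    hWint.lintegral_lt_top.ne (ε := ENNReal.ofReal (ε / 2) * ENNReal.ofReal (s ^ N))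
    (by positivity)
  refine ⟨δ, hδ, fun E hEΩ _ hEδ y hy => ?_⟩
  have hWE :
      ∫⁻ x in E, ENNReal.ofReal (W x) ≤ ENNReal.ofReal (ε / 2) * ENNReal.ofReal (s ^ N) := by
    simpa only [Measure.restrict_restrict_of_subset hEΩ] using
      hδabs E ((Measure.restrict_apply_le _ _).trans hEδ)
  calc ∫⁻ x in E, ENNReal.ofReal (W x) / ENNReal.ofReal (dist x y ^ N)
      ≤ N * (∫⁻ r in Ioo 0 s,
            (∫⁻ x in E ∩ Metric.ball y r, ENNReal.ofReal (W x)) / ENNReal.ofReal (r ^ (N + 1)))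
          + (∫⁻ x in E, ENNReal.ofReal (W x)) / ENNReal.ofReal (s ^ N) :=
        lintegral_div_dist_pow_le hWm.ennreal_ofReal N hs.le E y
    _ ≤ ENNReal.ofReal (ε / 2) + ENNReal.ofReal (ε / 2) := by
        gcongr ?_ + ?_
        · refine le_trans ?_ (hΩsmall y hy)
          gcongr
        · exact ENNReal.div_le_of_le_mul hWE
    _ = ENNReal.ofReal ε := by
        rw [← ENNReal.ofReal_add (half_pos hε).le (half_pos hε).le, add_halves]

theorem stmt2 {N : ℕ} (Ω : Set (EuclideanSpace ℝ (Fin N)))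
    (hΩ : Bornology.IsBounded Ω) (hΩm : MeasurableSet Ω)
    (W : EuclideanSpace ℝ (Fin N) → ℝ) (hWm : Measurable W) (hWnn : ∀ x ∈ Ω, 0 ≤ W x)
    (hWint : IntegrableOn W Ω)
    (hsmall : ∀ η > (0:ℝ), ∃ s₀ > (0:ℝ), ∀ y ∈ frontier Ω,
      (N : ℝ≥0∞) * ∫⁻ r in Set.Ioo (0:ℝ) s₀,
          (∫⁻ x in Ω ∩ Metric.ball y r, ENNReal.ofReal (W x)) / ENNReal.ofReal (r ^ (N + 1))
        ≤ ENNReal.ofReal η) :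
    ∀ ε > (0:ℝ), ∃ δ > (0:ℝ), ∀ E : Set (EuclideanSpace ℝ (Fin N)),
      E ⊆ Ω → MeasurableSet E → volume E ≤ ENNReal.ofReal δ →
      ∀ y ∈ frontier Ω,
        ∫⁻ x in E, ENNReal.ofReal (W x) / ENNReal.ofReal (dist x y ^ N)
          ≤ ENNReal.ofReal ε :=
  stmt2_general Ω W hWm hWint hsmall
end

section
/- With the capacity C defined as above from a lower semicontinuous kernel K : Y → [0,∞] (C(E) = sup{μ(E) : μ(Eᶜ)=0, ∫K dμ ≤ 1}), for any two Borel sets E₁, E₂ ⊂ Y one has C(E₁ ∪ E₂) = max{C(E₁), C(E₂)}. -/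
open MeasureTheory Set
open scoped ENNReal

/- If `ν` is concentrated on `E` then so are its multiples, and `a⁻¹ • ν` is admissible for
`a = ∫ K dν`; hence `ν(E) ≤ (∫ K dν) · C(E)` whenever `C(E) < ∞` (when `a = 0`, all `n • ν` are
admissible, forcing `ν(E) = 0`). Given `μ` concentrated on `E₁ ∪ E₂`, split it as
`μ = μ|E₁ + μ|E₁ᶜ`, the second piece being concentrated on `E₂`. The energies `a, b` of the two
pieces add up to `∫ K dμ ≤ 1`, so `μ(E₁ ∪ E₂) ≤ a C(E₁) + b C(E₂) ≤ max (C E₁) (C E₂)`. -/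

namespace MeasureTheory

variable {Y : Type*} [MeasurableSpace Y]

noncomputable def capacity (K : Y → ℝ≥0∞) (E : Set Y) : ℝ≥0∞ :=
  sSup {c : ℝ≥0∞ | ∃ μ : Measure Y, IsFiniteMeasure μ ∧
    μ Eᶜ = 0 ∧ (∫⁻ y, K y ∂μ) ≤ 1 ∧ c = μ E}

variable {K : Y → ℝ≥0∞} {E F : Set Y} {μ : Measure Y}

theorem le_capacity [IsFiniteMeasure μ] (hμE : μ Eᶜ = 0) (hμK : ∫⁻ y, K y ∂μ ≤ 1) :
    μ E ≤ capacity K E :=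
  le_sSup ⟨μ, inferInstance, hμE, hμK, rfl⟩

theorem capacity_le {c : ℝ≥0∞}
    (h : ∀ μ : Measure Y, IsFiniteMeasure μ → μ Eᶜ = 0 → ∫⁻ y, K y ∂μ ≤ 1 → μ E ≤ c) :
    capacity K E ≤ c :=
  sSup_le <| by
    rintro _ ⟨μ, hμ, hμE, hμK, rfl⟩
    exact h μ hμ hμE hμK

theorem capacity_mono (hEF : E ⊆ F) : capacity K E ≤ capacity K F :=
  capacity_le fun _ _ hμE hμK =>
    (measure_mono hEF).trans
      (le_capacity (measure_mono_null (compl_subset_compl.mpr hEF) hμE) hμK)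

theorem smul_measure_le_capacity [IsFiniteMeasure μ] (hμE : μ Eᶜ = 0) {t : ℝ≥0∞}
    (ht : t ≠ ⊤) (htK : t * ∫⁻ y, K y ∂μ ≤ 1) : t * μ E ≤ capacity K E := by
  have := Measure.smul_finite μ ht
  simpa using le_capacity (μ := t • μ) (by simp [hμE]) (by simpa using htK)

theorem measure_le_lintegral_mul_capacity [IsFiniteMeasure μ] (hμE : μ Eᶜ = 0)
    (hμK : ∫⁻ y, K y ∂μ ≠ ⊤) (hC : capacity K E ≠ ⊤) :
    μ E ≤ (∫⁻ y, K y ∂μ) * capacity K E := by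
  set a := ∫⁻ y, K y ∂μ
  by_cases ha : a = 0
  · suffices μ E = 0 by simp [this]
    by_contra hμE0
    obtain ⟨n, hn⟩ := ENNReal.exists_nat_mul_gt hμE0 hC
    exact (smul_measure_le_capacity (K := K) hμE (ENNReal.natCast_ne_top n)
      (by simp [a, ha])).not_gt hn
  · have := smul_measure_le_capacity hμE (ENNReal.inv_ne_top.mpr ha)
      (ENNReal.inv_mul_cancel ha hμK).le
    rwa [ENNReal.mul_le_iff_le_inv (ENNReal.inv_ne_zero.mpr hμK) (ENNReal.inv_ne_top.mpr ha),
      inv_inv] at this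

theorem measure_le_of_compl_null (hμE : μ Eᶜ = 0) (s : Set Y) : μ s ≤ μ E :=
  measure_mono_ae <| ae_le_set.mpr <| measure_mono_null (fun _ hx => hx.2) hμE

theorem capacity_union_le (hE : MeasurableSet E) :
    capacity K (E ∪ F) ≤ max (capacity K E) (capacity K F) := by
  refine capacity_le fun μ _ hμ hμK => ?_
  set M := max (capacity K E) (capacity K F)
  rcases eq_or_ne M ⊤ with hM | hM
  · exact hM ▸ le_top
  obtain ⟨hCE, hCF⟩ : capacity K E ≠ ⊤ ∧ capacity K F ≠ ⊤ := by simpa [M] using hM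
  set μ₁ := μ.restrict E
  set μ₂ := μ.restrict Eᶜ
  have hμ₁ : μ₁ Eᶜ = 0 := by simp [μ₁, Measure.restrict_apply hE.compl]
  have hμ₂ : μ₂ Fᶜ = 0 := by
    rw [Measure.restrict_apply' hE.compl, ← compl_union, union_comm]; exact hμ
  have hsplit : μ₁ + μ₂ = μ := Measure.restrict_add_restrict_compl hE
  set a := ∫⁻ y, K y ∂μ₁
  set b := ∫⁻ y, K y ∂μ₂
  have hab : a + b ≤ 1 := by
    rwa [← lintegral_add_measure, hsplit]
  have ha : a ≠ ⊤ := ne_top_of_le_ne_top ENNReal.one_ne_top (le_self_add.trans hab)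
  have hb : b ≠ ⊤ := ne_top_of_le_ne_top ENNReal.one_ne_top (le_add_self.trans hab)
  calc μ (E ∪ F) = μ₁ (E ∪ F) + μ₂ (E ∪ F) := by rw [← Measure.add_apply, hsplit]
    _ ≤ μ₁ E + μ₂ F :=
        add_le_add (measure_le_of_compl_null hμ₁ _) (measure_le_of_compl_null hμ₂ _)
    _ ≤ a * capacity K E + b * capacity K F :=
        add_le_add (measure_le_lintegral_mul_capacity hμ₁ ha hCE)
          (measure_le_lintegral_mul_capacity hμ₂ hb hCF)
    _ ≤ a * M + b * M := by gcongr <;> simp [M]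
    _ = (a + b) * M := (add_mul _ _ _).symm
    _ ≤ 1 * M := by gcongr
    _ = M := one_mul M

theorem capacity_union (hE : MeasurableSet E) :
    capacity K (E ∪ F) = max (capacity K E) (capacity K F) :=
  (capacity_union_le hE).antisymm
    (max_le (capacity_mono subset_union_left) (capacity_mono subset_union_right))

end MeasureTheory

theorem stmt6_general {Y : Type*}
    [MeasurableSpace Y]
    (K : Y → ℝ≥0∞)
    (C : Set Y → ℝ≥0∞)
    (hC : ∀ E : Set Y, C E = sSup {c : ℝ≥0∞ | ∃ μ : Measure Y, IsFiniteMeasure μ ∧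
        μ Eᶜ = 0 ∧ (∫⁻ y, K y ∂μ) ≤ 1 ∧ c = μ E})
    (E₁ E₂ : Set Y) (h₁ : MeasurableSet E₁) :
    C (E₁ ∪ E₂) = max (C E₁) (C E₂) := by
  obtain rfl : C = capacity K := funext hC
  exact capacity_union h₁

theorem stmt6 {Y : Type*} [MetricSpace Y] [CompactSpace Y]
    [MeasurableSpace Y] [BorelSpace Y]
    (K : Y → ℝ≥0∞) (hK : LowerSemicontinuous K)
    (C : Set Y → ℝ≥0∞)
    (hC : ∀ E : Set Y, C E = sSup {c : ℝ≥0∞ | ∃ μ : Measure Y, IsFiniteMeasure μ ∧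
        μ Eᶜ = 0 ∧ (∫⁻ y, K y ∂μ) ≤ 1 ∧ c = μ E})
    (E₁ E₂ : Set Y) (h₁ : MeasurableSet E₁) (h₂ : MeasurableSet E₂) :
    C (E₁ ∪ E₂) = max (C E₁) (C E₂) :=
  stmt6_general K C hC E₁ E₂ h₁
end
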